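/- arXiv:1204.6689 — 8 statements merged into one kernel-verified Lean document; each statement's English description precedes it below -/
import Mathlib

section
/- For any positive integer m and any positive integer N > 1, the Dirichlet convolution of μ*_m and ν*_m vanishes at N, where μ*_m(n) = μ_m(n)·λ(n) and ν*_m(n) = (−e^{2πi/m})^{Ω(n)}; that is, ∑_{d ∣ N} μ*_m(d) · ν*_m(N/d) = 0. -/
/-!
With z = -e^{2πi/m}, the d-th term is μ(d) z^{Ω(d)} z^{Ω(N/d)}, because ω = Ω on squarefree
numbers and μ(d) = (-1)^{Ω(d)} there. Since Ω is completely additive, every term equals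
μ(d) z^{Ω(N)}, and the sum vanishes because ∑_{d ∣ N} μ(d) = 0 for N > 1.
-/

open Real Complex Finset

namespace ArithmeticFunction

open scoped ArithmeticFunction.Moebius ArithmeticFunction.Omega ArithmeticFunction.omega

theorem sum_divisors_moebius_eq_zero {R : Type*} [Ring R] {n : ℕ} (hn : 1 < n) :
    ∑ d ∈ n.divisors, (μ d : R) = 0 := by
  simpa only [coe_moebius_mul_coe_zeta, one_apply_ne hn.ne', intCoe_apply, eq_comm] using
    coe_mul_zeta_apply (f := (μ : ArithmeticFunction R)) (x := n)

theorem ite_squarefree_pow_cardDistinctFactors_mul_neg_one_pow {R : Type*} [CommRing R]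
    (z : R) (d : ℕ) :
    (if Squarefree d then z ^ ω d else 0) * (-1) ^ Ω d = μ d * z ^ Ω d := by
  by_cases hd : Squarefree d
  · rw [if_pos hd, moebius_apply_of_squarefree hd,
      (cardDistinctFactors_eq_cardFactors_iff_squarefree hd.ne_zero).mpr hd]
    push_cast
    ring
  · simp [hd, moebius_eq_zero_of_not_squarefree hd]

theorem cardFactors_add_cardFactors_div {n d : ℕ} (hn : n ≠ 0) (hd : d ∣ n) :
    Ω d + Ω (n / d) = Ω n := by
  obtain ⟨e, rfl⟩ := hd
  obtain ⟨hd0, he0⟩ := mul_ne_zero_iff.mp hn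
  rw [Nat.mul_div_cancel_left _ (Nat.pos_of_ne_zero hd0), cardFactors_mul hd0 he0]

theorem sum_divisors_moebius_mul_pow_cardFactors_mul_pow_cardFactors_div
    {R : Type*} [CommRing R] (z : R) {n : ℕ} (hn : 1 < n) :
    ∑ d ∈ n.divisors, μ d * z ^ Ω d * z ^ Ω (n / d) = 0 :=
  calc ∑ d ∈ n.divisors, μ d * z ^ Ω d * z ^ Ω (n / d)
      = ∑ d ∈ n.divisors, (μ d : R) * z ^ Ω n := by
        refine Finset.sum_congr rfl fun d hd => ?_
        rw [mul_assoc, ← pow_add,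
          cardFactors_add_cardFactors_div (by omega) (Nat.dvd_of_mem_divisors hd)]
    _ = 0 := by rw [← Finset.sum_mul, sum_divisors_moebius_eq_zero hn, zero_mul]

end ArithmeticFunction

theorem dirichlet_conv_vanishes_general (m : ℕ) (N : ℕ) (hN : 1 < N) :
    ∑ d ∈ N.divisors,
      ((if Squarefree d then (-Complex.exp (2 * Real.pi * Complex.I / m)) ^
          (ArithmeticFunction.cardDistinctFactors d) else 0) *
        (-1 : ℂ) ^ (ArithmeticFunction.cardFactors d)) *
      (-Complex.exp (2 * Real.pi * Complex.I / m)) ^ (ArithmeticFunction.cardFactors (N / d))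
      = 0 := by
  simp only [ArithmeticFunction.ite_squarefree_pow_cardDistinctFactors_mul_neg_one_pow]
  exact ArithmeticFunction.sum_divisors_moebius_mul_pow_cardFactors_mul_pow_cardFactors_div _ hN

theorem dirichlet_conv_vanishes (m : ℕ) (hm : 0 < m) (N : ℕ) (hN : 1 < N) :
    ∑ d ∈ N.divisors,
      ((if Squarefree d then (-Complex.exp (2 * Real.pi * Complex.I / m)) ^
          (ArithmeticFunction.cardDistinctFactors d) else 0) *
        (-1 : ℂ) ^ (ArithmeticFunction.cardFactors d)) *
      (-Complex.exp (2 * Real.pi * Complex.I / m)) ^ (ArithmeticFunction.cardFactors (N / d))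
      = 0 :=
  dirichlet_conv_vanishes_general m N hN
end

section
/- The arithmetic function μ*_m defined by μ*_m(n) = μ_m(n)·λ(n) is the inverse of ν*_m(n) = (−e^{2πi/m})^{Ω(n)} with respect to Dirichlet convolution: for every n ≥ 1, ∑_{d ∣ n} μ*_m(d) ν*_m(n/d) equals 1 if n = 1 and 0 otherwise. -/
/-! On a squarefree divisor `d` of `n` we have `ω(d) = Ω(d)` and `Ω(n) = Ω(d) + Ω(n/d)`, so the
`d`-th term of the convolution is `μ(d) z^{Ω(n)}` with `z = -e^{2πi/m}`. The sum is therefore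
`z^{Ω(n)} ∑_{d ∣ n} μ(d)`, which vanishes unless `n = 1`. -/

open Real Complex Finset

namespace ArithmeticFunction

open scoped Moebius Omega omega

theorem sum_divisors_moebius {R : Type*} [Ring R] (n : ℕ) :
    ∑ d ∈ n.divisors, (μ d : R) = if n = 1 then 1 else 0 := by
  rw [← one_apply, ← coe_moebius_mul_coe_zeta, coe_mul_zeta_apply]
  simp only [intCoe_apply]

theorem cardFactors_eq_add_cardFactors_div {d n : ℕ} (hd : d ∈ n.divisors) :
    Ω n = Ω d + Ω (n / d) := by
  obtain ⟨hdvd, hn⟩ := Nat.mem_divisors.mp hd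
  have hd0 : d ≠ 0 := ne_zero_of_dvd_ne_zero hn hdvd
  have hnd0 : n / d ≠ 0 := (Nat.div_ne_zero_iff_of_dvd hdvd).mpr ⟨hn, hd0⟩
  conv_lhs => rw [← Nat.mul_div_cancel' hdvd]
  exact cardFactors_mul hd0 hnd0

theorem ite_squarefree_mul_pow_cardFactors_div_eq_moebius_mul
    {R : Type*} [CommRing R] (z : R) {d n : ℕ} (hd : d ∈ n.divisors) :
    ((if Squarefree d then z ^ ω d else 0) * (-1) ^ Ω d) * z ^ Ω (n / d) = μ d * z ^ Ω n := by
  by_cases hsq : Squarefree d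
  · have hω : ω d = Ω d :=
      (cardDistinctFactors_eq_cardFactors_iff_squarefree (Nat.pos_of_mem_divisors hd).ne').mpr hsq
    rw [if_pos hsq, moebius_apply_of_squarefree hsq, hω, cardFactors_eq_add_cardFactors_div hd,
      pow_add]
    push_cast
    ring
  · rw [if_neg hsq, moebius_eq_zero_of_not_squarefree hsq]
    simp

end ArithmeticFunction

open ArithmeticFunction in
theorem dirichlet_inverse_general (m : ℕ) (n : ℕ) :
    ∑ d ∈ n.divisors,
      ((if Squarefree d then (-Complex.exp (2 * Real.pi * Complex.I / m)) ^
          (ArithmeticFunction.cardDistinctFactors d) else 0) *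
        (-1 : ℂ) ^ (ArithmeticFunction.cardFactors d)) *
      (-Complex.exp (2 * Real.pi * Complex.I / m)) ^ (ArithmeticFunction.cardFactors (n / d))
      = if n = 1 then 1 else 0 := by
  rw [sum_congr rfl fun d hd =>
      ite_squarefree_mul_pow_cardFactors_div_eq_moebius_mul _ hd,
    ← sum_mul, sum_divisors_moebius]
  split_ifs with h1 <;> simp [h1]

theorem dirichlet_inverse (m : ℕ) (hm : 0 < m) (n : ℕ) (hn : 1 ≤ n) :
    ∑ d ∈ n.divisors,
      ((if Squarefree d then (-Complex.exp (2 * Real.pi * Complex.I / m)) ^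
          (ArithmeticFunction.cardDistinctFactors d) else 0) *
        (-1 : ℂ) ^ (ArithmeticFunction.cardFactors d)) *
      (-Complex.exp (2 * Real.pi * Complex.I / m)) ^ (ArithmeticFunction.cardFactors (n / d))
      = if n = 1 then 1 else 0 :=
  dirichlet_inverse_general m n
end

section
/- For every real x ≥ 1 and positive integer m, ∑_{n ≤ x} μ_m(n) ⌊x/n⌋ = ∑_{n ≤ x} (1 − e^{2πi/m})^{ω(n)}. -/
open Real Complex Finset

/-!
`μ_m` is `g_w : n ↦ w^{ω(n)}` on squarefree `n` (and `0` elsewhere) with `w = -e^{2πi/m}`.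
The squarefree divisors of `k ≠ 0` are the products of subsets of its prime factors, so by the
binomial theorem `(g_w * ζ)(k) = (1 + w)^{ω(k)}`. Exchanging the order of summation,
`∑_{k ≤ x} (g_w * ζ)(k) = ∑_{n ≤ x} g_w(n) ⌊x/n⌋`.
-/

namespace ArithmeticFunction

open scoped ArithmeticFunction.omega ArithmeticFunction.zeta

variable {R : Type*}

theorem cardDistinctFactors_eq_card_primeFactors (n : ℕ) : ω n = n.primeFactors.card := by
  rw [cardDistinctFactors_apply, Nat.primeFactors, List.card_toFinset]

theorem sum_divisors_filter_squarefree_pow_cardDistinctFactors [CommSemiring R] (w : R) {n : ℕ}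
    (hn : n ≠ 0) : ∑ d ∈ n.divisors with Squarefree d, w ^ ω d = (w + 1) ^ ω n := by
  rw [Nat.sum_divisors_filter_squarefree hn, Nat.factors_eq,
    cardDistinctFactors_eq_card_primeFactors, ← sum_pow_mul_eq_add_pow]
  refine sum_congr rfl fun t ht ↦ ?_
  have hprime : ∀ p ∈ t, p.Prime :=
    fun _ hp ↦ Nat.prime_of_mem_primeFactors (mem_powerset.1 ht hp)
  rw [one_pow, mul_one, t.prod_val, Function.id_def, cardDistinctFactors_eq_card_primeFactors,
    Nat.primeFactors_prod hprime]

def squarefreeWeight [MonoidWithZero R] (w : R) : ArithmeticFunction R :=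
  ⟨fun n ↦ if Squarefree n then w ^ ω n else 0, by simp⟩

theorem squarefreeWeight_apply [MonoidWithZero R] (w : R) (n : ℕ) :
    squarefreeWeight w n = if Squarefree n then w ^ ω n else 0 :=
  rfl

theorem squarefreeWeight_mul_zeta_apply [CommSemiring R] (w : R) {n : ℕ} (hn : n ≠ 0) :
    (squarefreeWeight w * ζ) n = (w + 1) ^ ω n := by
  rw [coe_mul_zeta_apply, ← sum_divisors_filter_squarefree_pow_cardDistinctFactors w hn,
    sum_filter]
  rfl

end ArithmeticFunction

theorem sum_mu_m_floor_general (m : ℕ) (x : ℝ) :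
    ∑ n ∈ Finset.Icc 1 ⌊x⌋₊,
      (if Squarefree n then (-Complex.exp (2 * Real.pi * Complex.I / m)) ^
          (ArithmeticFunction.cardDistinctFactors n) else 0) * (⌊x / (n : ℝ)⌋₊ : ℂ)
    = ∑ n ∈ Finset.Icc 1 ⌊x⌋₊,
        (1 - Complex.exp (2 * Real.pi * Complex.I / m)) ^
          (ArithmeticFunction.cardDistinctFactors n) := by
  set w : ℂ := -Complex.exp (2 * Real.pi * Complex.I / m)
  have hIcc : Icc 1 ⌊x⌋₊ = Ioc 0 ⌊x⌋₊ := Icc_add_one_left_eq_Ioc 0 _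
  have hswap :=
    ArithmeticFunction.sum_Ioc_mul_zeta_eq_sum (ArithmeticFunction.squarefreeWeight w) ⌊x⌋₊
  simp only [ArithmeticFunction.squarefreeWeight_apply] at hswap
  simp only [hIcc, Nat.floor_div_natCast]
  rw [← hswap]
  refine sum_congr rfl fun n hn ↦ ?_
  rw [ArithmeticFunction.squarefreeWeight_mul_zeta_apply w (mem_Ioc.1 hn).1.ne', neg_add_eq_sub]

theorem sum_mu_m_floor (m : ℕ) (hm : 0 < m) (x : ℝ) (hx : 1 ≤ x) :
    ∑ n ∈ Finset.Icc 1 ⌊x⌋₊,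
      (if Squarefree n then (-Complex.exp (2 * Real.pi * Complex.I / m)) ^
          (ArithmeticFunction.cardDistinctFactors n) else 0) * (⌊x / (n : ℝ)⌋₊ : ℂ)
    = ∑ n ∈ Finset.Icc 1 ⌊x⌋₊,
        (1 - Complex.exp (2 * Real.pi * Complex.I / m)) ^
          (ArithmeticFunction.cardDistinctFactors n) :=
  sum_mu_m_floor_general m x
end

section
/- The infinite product ∏_p (1 + e^{2πi/3}/p) over all primes p converges to 0, i.e., ∏_{p ≤ x}(1 + e^{2πi/3}/p) → 0 as x → ∞. -/
open Real Complex Finset Filter Topology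

/-! Since `‖1 + z‖² = 1 + 2 Re z + ‖z‖² ≤ exp (2 Re z + ‖z‖²)`, a partial product satisfies
`‖∏ (1 + aₙ)‖ ≤ exp (∑ Re aₙ + ½ ∑ ‖aₙ‖²)`. For `aₚ = ω / p` with `ω = e^{2πi/3}`, `Re ω = -1/2`, the
first sum is `-½ ∑ 1/p → -∞` while the second is bounded by `½ ∑ 1/p²`. -/

theorem norm_one_add_le_exp (z : ℂ) : ‖1 + z‖ ≤ Real.exp (z.re + ‖z‖ ^ 2 / 2) := by
  have hsq : ‖1 + z‖ ^ 2 = 1 + (2 * z.re + ‖z‖ ^ 2) := by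
    rw [Complex.sq_norm, Complex.sq_norm, normSq_apply, normSq_apply]
    simp only [add_re, one_re, add_im, one_im]
    ring
  refine (pow_le_pow_iff_left₀ (norm_nonneg _) (Real.exp_nonneg _) two_ne_zero).mp ?_
  calc ‖1 + z‖ ^ 2 = 2 * z.re + ‖z‖ ^ 2 + 1 := by rw [hsq]; ring
    _ ≤ Real.exp (2 * z.re + ‖z‖ ^ 2) := Real.add_one_le_exp _
    _ = Real.exp (z.re + ‖z‖ ^ 2 / 2) ^ 2 := by rw [← Real.exp_nat_mul]; push_cast; ring_nf

theorem tendsto_prod_range_one_add_of_tendsto_sum_re_atBot {f : ℕ → ℂ}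
    (hre : Tendsto (fun n ↦ ∑ i ∈ range n, (f i).re) atTop atBot)
    (hsq : Summable fun n ↦ ‖f n‖ ^ 2) :
    Tendsto (fun n ↦ ∏ i ∈ range n, (1 + f i)) atTop (𝓝 0) := by
  set C := ∑' i, ‖f i‖ ^ 2
  have hbound (n : ℕ) :
      ‖∏ i ∈ range n, (1 + f i)‖ ≤ Real.exp (∑ i ∈ range n, (f i).re + C / 2) :=
    calc ‖∏ i ∈ range n, (1 + f i)‖ = ∏ i ∈ range n, ‖1 + f i‖ := norm_prod _ _
      _ ≤ ∏ i ∈ range n, Real.exp ((f i).re + ‖f i‖ ^ 2 / 2) :=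
        prod_le_prod (fun _ _ ↦ norm_nonneg _) fun i _ ↦ norm_one_add_le_exp (f i)
      _ = Real.exp (∑ i ∈ range n, (f i).re + (∑ i ∈ range n, ‖f i‖ ^ 2) / 2) := by
        rw [← Real.exp_sum, sum_add_distrib, sum_div]
      _ ≤ Real.exp (∑ i ∈ range n, (f i).re + C / 2) := by
        gcongr
        exact hsq.sum_le_tsum _ fun _ _ ↦ by positivity
  rw [tendsto_zero_iff_norm_tendsto_zero]
  exact squeeze_zero (fun _ ↦ norm_nonneg _) hbound
    (tendsto_exp_atBot.comp (tendsto_atBot_add_const_right _ _ hre))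

theorem tendsto_sum_one_div_primes_atTop :
    Tendsto (fun n ↦ ∑ p ∈ (range n).filter Nat.Prime, (1 / p : ℝ)) atTop atTop := by
  have hnn (n : ℕ) : 0 ≤ {p : ℕ | p.Prime}.indicator (fun n : ℕ ↦ (1 / n : ℝ)) n :=
    Set.indicator_nonneg (fun _ _ ↦ by positivity) n
  refine ((not_summable_iff_tendsto_nat_atTop_of_nonneg hnn).mp
    not_summable_one_div_on_primes).congr fun n ↦ ?_
  rw [sum_filter]
  exact sum_congr rfl fun n _ ↦ by simp [Set.indicator_apply]

theorem exp_two_pi_mul_I_div_three_re : (exp (2 * π * I / 3)).re = -(1 / 2) := by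
  rw [show 2 * π * I / 3 = ((2 * π / 3 : ℝ) : ℂ) * I by push_cast; ring, exp_ofReal_mul_I_re,
    show 2 * π / 3 = π - π / 3 by ring, Real.cos_pi_sub, Real.cos_pi_div_three]

theorem norm_exp_two_pi_mul_I_div_three : ‖exp (2 * π * I / 3)‖ = 1 := by
  rw [show 2 * π * I / 3 = ((2 * π / 3 : ℝ) : ℂ) * I by push_cast; ring, norm_exp_ofReal_mul_I]

theorem prod_tendsto_zero_m3 :
    Filter.Tendsto
      (fun N : ℕ => ∏ p ∈ (Finset.range N).filter Nat.Prime,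
        (1 + Complex.exp (2 * Real.pi * Complex.I / 3) / p))
      Filter.atTop (nhds 0) := by
  set ω := exp (2 * π * I / 3)
  have hω_re : ω.re = -(1 / 2) := exp_two_pi_mul_I_div_three_re
  have hω_norm : ‖ω‖ = 1 := norm_exp_two_pi_mul_I_div_three
  set a : ℕ → ℂ := fun n ↦ if n.Prime then ω / n else 0
  have hprod (N : ℕ) :
      ∏ p ∈ (range N).filter Nat.Prime, (1 + ω / p) = ∏ n ∈ range N, (1 + a n) := by
    rw [prod_filter]
    exact prod_congr rfl fun n _ ↦ by split_ifs with h <;> simp [a, h]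
  have hre (N : ℕ) : ∑ n ∈ range N, (a n).re
      = -(1 / 2) * ∑ p ∈ (range N).filter Nat.Prime, (1 / p : ℝ) := by
    rw [sum_filter, mul_sum]
    refine sum_congr rfl fun n _ ↦ ?_
    simp only [a]
    split_ifs
    · rw [div_natCast_re, hω_re]; ring
    · simp
  have hsq (n : ℕ) : ‖a n‖ ^ 2 ≤ 1 / (n : ℝ) ^ 2 := by
    simp only [a]
    split_ifs <;> simp [hω_norm]
  simp_rw [hprod]
  refine tendsto_prod_range_one_add_of_tendsto_sum_re_atBot ?_ ?_
  · simp_rw [hre]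
    exact tendsto_sum_one_div_primes_atTop.const_mul_atTop_of_neg (by norm_num)
  · exact (Real.summable_one_div_nat_pow.mpr one_lt_two).of_nonneg_of_le
      (fun _ ↦ by positivity) hsq
end

section
/- For any positive integer m and complex s with Re(s) > 1, ∑_{n=1}^∞ (−e^{2πi/m})^{ω(n)}/n^s = ∏_p (1 − e^{2πi/m}/(p^s − 1)), where ω(n) is the number of distinct prime factors of n. -/
/-!
For `‖w‖ ≤ 1` and `Re s > 1` the function `n ↦ w ^ ω(n) / n ^ s` is multiplicative and absolutely
summable, so its series factors as `∏_p ∑_e w ^ ω(p ^ e) / p ^ (e s)`. As `ω(p ^ e) = 1` for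
`e ≥ 1`, each factor is `1 + w ∑_{e ≥ 1} p ^ (-e s) = 1 + w / (p ^ s - 1)`. The theorem is the
case `w = -exp(2πi/m)`.
-/

open Real Complex Filter

open LSeries
open scoped ArithmeticFunction.omega

lemma LSeries_eq_tsum_pnat (f : ℕ → ℂ) (s : ℂ) :
    LSeries f s = ∑' n : ℕ+, f n / ((n : ℕ) : ℂ) ^ s := by
  rw [LSeries, ← tsum_pnat_eq_tsum_of_eq_zero (term_zero f s)]
  exact tsum_congr fun n ↦ term_of_ne_zero n.ne_zero f s

lemma LSeries.term_mul_of_coprime {f : ℕ → ℂ}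
    (hmul : ∀ {a b : ℕ}, a.Coprime b → f (a * b) = f a * f b) (s : ℂ) {a b : ℕ}
    (hab : a.Coprime b) : term f s (a * b) = term f s a * term f s b := by
  rcases eq_or_ne a 0 with rfl | ha
  · simp
  rcases eq_or_ne b 0 with rfl | hb
  · simp
  rw [term_of_ne_zero (mul_ne_zero ha hb), term_of_ne_zero ha, term_of_ne_zero hb, hmul hab,
    Nat.cast_mul, natCast_mul_natCast_cpow, mul_div_mul_comm]

theorem LSeries_eulerProduct_tprod {f : ℕ → ℂ} (hf₁ : f 1 = 1)
    (hmul : ∀ {a b : ℕ}, a.Coprime b → f (a * b) = f a * f b) {s : ℂ}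
    (hs : LSeriesSummable f s) :
    ∏' p : Nat.Primes, ∑' e, term f s (p ^ e) = LSeries f s :=
  EulerProduct.eulerProduct_tprod (by simp [hf₁]) (term_mul_of_coprime hmul s)
    (summable_norm_iff.mpr hs) (term_zero f s)

lemma pow_cardDistinctFactors_mul {M : Type*} [Monoid M] (w : M) {a b : ℕ} (hab : a.Coprime b) :
    w ^ ω (a * b) = w ^ ω a * w ^ ω b := by
  rw [ArithmeticFunction.cardDistinctFactors_mul hab, pow_add]

lemma LSeriesSummable_pow_cardDistinctFactors {w : ℂ} (hw : ‖w‖ ≤ 1) {s : ℂ} (hs : 1 < s.re) :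
    LSeriesSummable (fun n ↦ w ^ ω n) s :=
  LSeriesSummable_of_bounded_of_one_lt_re (m := 1)
    (fun _ _ ↦ (norm_pow w _).trans_le (pow_le_one₀ (norm_nonneg w) hw)) hs

lemma term_pow_cardDistinctFactors_prime_pow (w s : ℂ) {p : ℕ} (hp : p.Prime) (e : ℕ) :
    term (fun n ↦ w ^ ω n) s (p ^ (e + 1)) = w * ((p : ℂ) ^ s)⁻¹ ^ (e + 1) := by
  rw [term_of_ne_zero (pow_ne_zero _ hp.ne_zero),
    ArithmeticFunction.cardDistinctFactors_apply_prime_pow hp e.succ_ne_zero, pow_one,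
    Nat.cast_pow, ← natCast_cpow_natCast_mul, cpow_nat_mul, inv_pow, div_eq_mul_inv]

lemma tsum_term_pow_cardDistinctFactors_prime_pow (w : ℂ) {s : ℂ} (hs : 0 < s.re) {p : ℕ}
    (hp : p.Prime) :
    ∑' e, term (fun n ↦ w ^ ω n) s (p ^ e) = 1 + w / ((p : ℂ) ^ s - 1) := by
  set x := (p : ℂ) ^ s
  have hx : 1 < ‖x‖ := by
    rw [norm_natCast_cpow_of_pos hp.pos]
    exact Real.one_lt_rpow (by exact_mod_cast hp.one_lt) hs
  have hx₀ : x ≠ 0 := norm_pos_iff.mp (one_pos.trans hx)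
  have hx₁ : x - 1 ≠ 0 := by
    rintro h
    simp [sub_eq_zero.mp h] at hx
  have hgeom : HasSum (fun e ↦ x⁻¹ ^ e) (1 - x⁻¹)⁻¹ :=
    hasSum_geometric_of_norm_lt_one (by rw [norm_inv]; exact inv_lt_one_of_one_lt₀ hx)
  have htail : HasSum (fun e ↦ term (fun n ↦ w ^ ω n) s (p ^ (e + 1)))
      (w * (x⁻¹ * (1 - x⁻¹)⁻¹)) := by
    simp_rw [term_pow_cardDistinctFactors_prime_pow w s hp, pow_succ']
    exact (hgeom.mul_left x⁻¹).mul_left w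
  rw [(HasSum.zero_add (f := fun e ↦ term (fun n ↦ w ^ ω n) s (p ^ e)) htail).tsum_eq, pow_zero,
    term_of_ne_zero one_ne_zero, ArithmeticFunction.cardDistinctFactors_one, pow_zero,
    Nat.cast_one, one_cpow, div_one]
  field_simp

theorem LSeries_pow_cardDistinctFactors_eq_tprod {w : ℂ} (hw : ‖w‖ ≤ 1) {s : ℂ} (hs : 1 < s.re) :
    LSeries (fun n ↦ w ^ ω n) s = ∏' p : Nat.Primes, (1 + w / ((p : ℂ) ^ s - 1)) := by
  rw [← LSeries_eulerProduct_tprod (by simp) (pow_cardDistinctFactors_mul w)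
    (LSeriesSummable_pow_cardDistinctFactors hw hs)]
  exact tprod_congr fun p ↦ tsum_term_pow_cardDistinctFactors_prime_pow w (by linarith) p.prop

theorem zeta_m_euler_product_general (m : ℕ) (s : ℂ) (hs : 1 < s.re) :
    ∑' n : ℕ+, (-Complex.exp (2 * Real.pi * Complex.I / m)) ^
        (ArithmeticFunction.cardDistinctFactors (n : ℕ)) / ((n : ℕ) : ℂ) ^ s
      = ∏' p : Nat.Primes,
          (1 - Complex.exp (2 * Real.pi * Complex.I / m) / (((p : ℕ) : ℂ) ^ s - 1)) := by
  have hz : ‖-Complex.exp (2 * Real.pi * Complex.I / m)‖ = 1 := by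
    rw [norm_neg, show 2 * Real.pi * Complex.I / m = ((2 * Real.pi / m : ℝ) : ℂ) * Complex.I by
      push_cast; ring]
    exact norm_exp_ofReal_mul_I _
  rw [← LSeries_eq_tsum_pnat (fun n ↦ _ ^ ω n),
    LSeries_pow_cardDistinctFactors_eq_tprod hz.le hs]
  simp_rw [neg_div, ← sub_eq_add_neg]

theorem zeta_m_euler_product (m : ℕ) (hm : 0 < m) (s : ℂ) (hs : 1 < s.re) :
    ∑' n : ℕ+, (-Complex.exp (2 * Real.pi * Complex.I / m)) ^
        (ArithmeticFunction.cardDistinctFactors (n : ℕ)) / ((n : ℕ) : ℂ) ^ s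
      = ∏' p : Nat.Primes,
          (1 - Complex.exp (2 * Real.pi * Complex.I / m) / (((p : ℕ) : ℂ) ^ s - 1)) :=
  zeta_m_euler_product_general m s hs
end

section
/- For Re(s) > 1, ∑_{n=1}^∞ (−1)^{n−Ω(n)}/n^s = −(1 + 2^{1−s}) · ζ(2s)/ζ(s). -/
/-!
Since `λ = (-1)^Ω` is completely multiplicative with `λ(p) = -1`, its Euler product is
`∏_p (1 + p^{-s})⁻¹`; multiplied by the Euler product of `ζ(s)` it becomes
`∏_p (1 - p^{-2s})⁻¹ = ζ(2s)`, so `∑ λ(n) n^{-s} = ζ(2s) / ζ(s)`.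
The sign `(-1)^{n - Ω(n)}` is `(-1)^n λ(n)`, and `∑ (-1)^n a_n = 2 ∑ a_{2n} - ∑ a_n`;
complete multiplicativity turns the even part into `λ(2) 2^{-s} ∑ λ(n) n^{-s}`.
-/

open Complex

open ArithmeticFunction Nat

theorem tsum_neg_one_pow_mul {R : Type*} [Ring R] [UniformSpace R] [IsUniformAddGroup R]
    [CompleteSpace R] [T2Space R] {f : ℕ → R} (hf : Summable f) :
    ∑' n, (-1) ^ n * f n = 2 * ∑' n, f (2 * n) - ∑' n, f n := by
  have heven : HasSum (fun n ↦ f (2 * n)) _ :=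
    (hf.comp_injective (mul_right_injective₀ two_ne_zero)).hasSum
  have hodd : HasSum (fun n ↦ f (2 * n + 1)) _ :=
    (hf.comp_injective fun a b (h : 2 * a + 1 = 2 * b + 1) ↦ by omega).hasSum
  have halt : HasSum (fun n ↦ (-1) ^ n * f n) (∑' n, f (2 * n) + -∑' n, f (2 * n + 1)) :=
    .even_add_odd (by simpa [pow_mul] using heven) (by simpa [pow_succ, pow_mul] using hodd.neg)
  rw [halt.tsum_eq, ← tsum_even_add_odd heven.summable hodd.summable, two_mul]
  abel

lemma neg_one_zpow_natCast_sub_natCast {α : Type*} [DivisionRing α] (a b : ℕ) :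
    (-1 : α) ^ ((a : ℤ) - b) = (-1) ^ a * (-1) ^ b := by
  rw [zpow_sub₀ (by simp), zpow_natCast, zpow_natCast, div_eq_mul_inv, ← inv_pow, inv_neg_one]

lemma abs_liouville_le_one (n : ℕ) : |liouville n| ≤ 1 := by
  rcases eq_or_ne n 0 with rfl | hn
  · simp
  · simp [liouville_apply hn]

noncomputable def liouvilleSummandHom (s : ℂ) : ℕ →*₀ ℂ where
  toFun n := liouville n * (n : ℂ) ^ (-s)
  map_zero' := by simp
  map_one' := by simp [liouville_apply_one]
  map_mul' m n := by push_cast [liouville_apply_mul, natCast_mul_natCast_cpow]; ring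

@[simp]
lemma liouvilleSummandHom_apply (s : ℂ) (n : ℕ) :
    liouvilleSummandHom s n = liouville n * (n : ℂ) ^ (-s) :=
  rfl

lemma liouvilleSummandHom_prime (s : ℂ) {p : ℕ} (hp : p.Prime) :
    liouvilleSummandHom s p = -(p : ℂ) ^ (-s) := by
  simp [liouville_apply hp.ne_zero, cardFactors_apply_prime hp]

lemma summable_liouvilleSummandHom {s : ℂ} (hs : 1 < s.re) :
    Summable (fun n ↦ ‖liouvilleSummandHom s n‖) := by
  refine (summable_riemannZetaSummand hs).of_nonneg_of_le (fun _ ↦ norm_nonneg _) fun n ↦ ?_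
  rw [liouvilleSummandHom_apply, norm_mul, norm_intCast]
  exact mul_le_of_le_one_left (norm_nonneg _) (mod_cast abs_liouville_le_one n)

theorem liouville_eulerProduct_hasProd {s : ℂ} (hs : 1 < s.re) :
    HasProd (fun p : Primes ↦ (1 + (p : ℂ) ^ (-s))⁻¹) (∑' n, liouvilleSummandHom s n) := by
  convert EulerProduct.eulerProduct_completely_multiplicative_hasProd
    (summable_liouvilleSummandHom hs) using 1
  ext p
  rw [liouvilleSummandHom_prime s p.prop, sub_neg_eq_add]

theorem tsum_liouvilleSummandHom {s : ℂ} (hs : 1 < s.re) :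
    ∑' n, liouvilleSummandHom s n = riemannZeta (2 * s) / riemannZeta s := by
  have h2s : 1 < (2 * s).re := by simp; linarith
  have hprod := (liouville_eulerProduct_hasProd hs).mul (riemannZeta_eulerProduct_hasProd hs)
  have hlocal (p : Primes) :
      (1 + (p : ℂ) ^ (-s))⁻¹ * (1 - (p : ℂ) ^ (-s))⁻¹ = (1 - (p : ℂ) ^ (-(2 * s)))⁻¹ := by
    rw [← mul_inv, show -(2 * s) = (2 : ℕ) * -s by push_cast; ring, cpow_nat_mul]
    ring
  simp only [hlocal] at hprod
  rw [eq_div_iff (riemannZeta_ne_zero_of_one_lt_re hs)]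
  exact hprod.unique (riemannZeta_eulerProduct_hasProd h2s)

theorem dirichlet_series_identity (s : ℂ) (hs : 1 < s.re) :
    ∑' n : ℕ+, (-1 : ℂ) ^ (((n : ℕ) : ℤ) - (ArithmeticFunction.cardFactors (n : ℕ) : ℤ)) /
        ((n : ℕ) : ℂ) ^ s
      = -(1 + (2 : ℂ) ^ (1 - s)) * (riemannZeta (2 * s) / riemannZeta s) := by
  set g := liouvilleSummandHom s
  have hterm (n : ℕ+) :
      (-1 : ℂ) ^ (((n : ℕ) : ℤ) - cardFactors n) / ((n : ℕ) : ℂ) ^ s = (-1) ^ (n : ℕ) * g n := by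
    rw [neg_one_zpow_natCast_sub_natCast, div_eq_mul_inv, ← cpow_neg, liouvilleSummandHom_apply,
      liouville_apply n.ne_zero]
    push_cast
    ring
  have heven : ∑' n, g (2 * n) = -2 ^ (-s) * ∑' n, g n := by
    simp_rw [map_mul, tsum_mul_left, g, liouvilleSummandHom_prime s prime_two, Nat.cast_ofNat]
  calc _ = ∑' n : ℕ, (-1) ^ n * g n :=
        (tsum_congr hterm).trans (tsum_pnat_eq_tsum_of_eq_zero (f := fun n ↦ (-1) ^ n * g n)
          (by simp))
    _ = 2 * ∑' n, g (2 * n) - ∑' n, g n :=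
        tsum_neg_one_pow_mul (summable_liouvilleSummandHom hs).of_norm
    _ = -(1 + (2 : ℂ) ^ (1 - s)) * (riemannZeta (2 * s) / riemannZeta s) := by
      rw [heven, tsum_liouvilleSummandHom hs, cpow_sub _ _ two_ne_zero, cpow_one, cpow_neg]
      ring
end

section
/- If ∑_{n ≤ x} (−1)^{Ω(n)} = o(x) as x → ∞, then ∑_{n ≤ x} (−1)^{n−Ω(n)} = o(x) as x → ∞. -/
/-!
Write `λ n = (-1) ^ Ω n` and `L x = ∑_{n ≤ x} λ n`. The summand `(-1) ^ (n - Ω n)` equals `-λ n`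
for odd `n`, while for `n = 2 m` it equals `λ (2 m) = -λ n - 2 λ m`, since `Ω (2 m) = Ω m + 1`.
Summing gives `S x = -L x - 2 L (x / 2)`, and both terms are `o(x)` when `L x = o(x)`.
-/

open Finset Filter ArithmeticFunction
open scoped ArithmeticFunction.Omega

lemma neg_one_zpow_natCast_sub {α : Type*} [DivisionMonoid α] [HasDistribNeg α] (a b : ℕ) :
    (-1 : α) ^ ((a : ℤ) - b) = (-1) ^ a * (-1) ^ b := by
  rw [← pow_add, neg_one_zpow_eq_ite, neg_one_pow_eq_ite]
  simp [Int.even_sub, Nat.even_add]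

lemma cardFactors_prime_mul {p m : ℕ} (hp : p.Prime) (hm : m ≠ 0) : Ω (p * m) = Ω m + 1 := by
  rw [cardFactors_mul hp.ne_zero hm, cardFactors_apply_prime hp, add_comm]

lemma sum_Icc_ite_dvd {M : Type*} [AddCommMonoid M] (f : ℕ → M) {d : ℕ} (hd : d ≠ 0) (N : ℕ) :
    ∑ n ∈ Icc 1 N, (if d ∣ n then f (n / d) else 0) = ∑ m ∈ Icc 1 (N / d), f m := by
  rw [← sum_filter]
  have hd0 : 0 < d := Nat.pos_of_ne_zero hd
  refine sum_nbij' (· / d) (d * ·) ?_ ?_ ?_ ?_ ?_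
  · simp only [mem_filter, mem_Icc, and_imp]
    rintro _ h1 h2 ⟨k, rfl⟩
    rw [Nat.mul_div_cancel_left k hd0, Nat.le_div_iff_mul_le hd0]
    exact ⟨Nat.pos_of_mul_pos_left h1, mul_comm d k ▸ h2⟩
  · simp only [mem_filter, mem_Icc, and_imp]
    intro m h1 h2
    rw [Nat.le_div_iff_mul_le hd0] at h2
    exact ⟨⟨Nat.mul_pos hd0 h1, mul_comm m d ▸ h2⟩, dvd_mul_right d m⟩
  · simp only [mem_filter, and_imp]
    rintro _ - ⟨k, rfl⟩
    rw [Nat.mul_div_cancel_left k hd0]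
  · intro m _
    exact Nat.mul_div_cancel_left m hd0
  · intro _ _
    rfl

lemma neg_one_zpow_sub_cardFactors {R : Type*} [Field R] {n : ℕ} (hn : n ≠ 0) :
    (-1 : R) ^ ((n : ℤ) - Ω n) =
      -(-1) ^ Ω n - 2 * if 2 ∣ n then (-1) ^ Ω (n / 2) else 0 := by
  rw [neg_one_zpow_natCast_sub]
  split_ifs with h
  · obtain ⟨m, rfl⟩ := h
    rw [Nat.mul_div_cancel_left m two_pos, cardFactors_prime_mul Nat.prime_two (by omega),
      (even_two_mul m).neg_one_pow]
    ring
  · rw [(Nat.odd_iff.mpr (Nat.two_dvd_ne_zero.mp h)).neg_one_pow]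
    ring

lemma sum_neg_one_zpow_sub_cardFactors {R : Type*} [Field R] (N : ℕ) :
    ∑ n ∈ Icc 1 N, (-1 : R) ^ ((n : ℤ) - Ω n) =
      -∑ n ∈ Icc 1 N, (-1 : R) ^ Ω n - 2 * ∑ m ∈ Icc 1 (N / 2), (-1 : R) ^ Ω m := by
  rw [← sum_Icc_ite_dvd _ two_ne_zero, mul_sum, ← sum_neg_distrib, ← sum_sub_distrib]
  exact sum_congr rfl fun n hn ↦
    neg_one_zpow_sub_cardFactors (Nat.one_le_iff_ne_zero.mp (mem_Icc.mp hn).1)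

theorem S_little_o (h : Filter.Tendsto
      (fun x : ℝ => (∑ n ∈ Finset.Icc 1 ⌊x⌋₊,
        (-1 : ℝ) ^ (ArithmeticFunction.cardFactors n)) / x) Filter.atTop (nhds 0)) :
    Filter.Tendsto
      (fun x : ℝ => (∑ n ∈ Finset.Icc 1 ⌊x⌋₊,
        (-1 : ℝ) ^ ((n : ℤ) - (ArithmeticFunction.cardFactors n : ℤ))) / x)
      Filter.atTop (nhds 0) := by
  have h_half := h.comp (tendsto_id.atTop_div_const two_pos)
  have h_comb := h.neg.sub h_half
  rw [neg_zero, sub_zero] at h_comb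
  refine h_comb.congr' ?_
  filter_upwards [eventually_gt_atTop 0] with x hx
  simp only [Function.comp_apply, id, sum_neg_one_zpow_sub_cardFactors, Nat.floor_div_ofNat]
  field_simp
end

section
/- Abel summation remainder estimate: let a : ℕ → ℂ and A(t) = ∑_{n ≤ t} a(n). Suppose there are complex numbers c, z with z ≠ 0 and Re(z) ≠ 1 such that A(x) = c·x·(log x)^{z−1} + O(x (log x)^{Re(z)−2}) for x ≥ 2. Then for all x ≥ y ≥ 2, ∑_{y < n ≤ x} a(n)/n = (c/z)((log x)^z − (log y)^z) + O((log x)^{Re(z)−1}) + O((log y)^{Re(z)−1}). -/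
/-!
Partial summation gives `∑_{y < n ≤ x} a(n)/n = A(x)/x - A(y)/y + ∫_y^x A(t)/t² dt`. Split
`A(t) = c t (log t)^(z-1) + E(t)`. Since `(log t)^(z-1)/t` is the derivative of `(log t)^z / z`,
the main term contributes exactly `(c/z)((log x)^z - (log y)^z)` to the integral, and
`c (log x)^(z-1) - c (log y)^(z-1)` at the endpoints. The error `E(t) = O(t (log t)^(Re z - 2))`
is `O((log t)^(Re z - 1))` after division by `t ≥ 2`, and against `1/t²` it integrates to at most
a multiple of `|(log x)^(Re z - 1) - (log y)^(Re z - 1)| / |Re z - 1|`, which is where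
`Re z ≠ 1` enters.
-/

open Complex Finset Real MeasureTheory intervalIntegral

section AbelSummation

variable {𝕜 : Type*} [RCLike 𝕜]

theorem sum_Icc_zero_update_zero (c : ℕ → 𝕜) (m : ℕ) :
    ∑ k ∈ Icc 0 m, Function.update c 0 0 k = ∑ k ∈ Icc 1 m, c k := by
  rw [Icc_eq_cons_Ioc (Nat.zero_le m), sum_cons, Function.update_self, zero_add,
    ← Icc_add_one_left_eq_Ioc]
  exact sum_congr rfl fun k hk => Function.update_of_ne (by grind) _ _

theorem sum_mul_eq_sub_sub_integral_mul_Icc_one (c : ℕ → 𝕜) {f : ℝ → 𝕜} {a b : ℝ}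
    (ha : 0 ≤ a) (hab : a ≤ b) (hf_diff : ∀ t ∈ Set.Icc a b, DifferentiableAt ℝ f t)
    (hf_int : IntegrableOn (deriv f) (Set.Icc a b)) :
    ∑ k ∈ Ioc ⌊a⌋₊ ⌊b⌋₊, f k * c k =
      f b * (∑ k ∈ Icc 1 ⌊b⌋₊, c k) - f a * (∑ k ∈ Icc 1 ⌊a⌋₊, c k) -
        ∫ t in Set.Ioc a b, deriv f t * ∑ k ∈ Icc 1 ⌊t⌋₊, c k := by
  -- Zeroing `c 0` leaves the left side unchanged and turns sums from `0` into sums from `1`.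
  simp_rw [← sum_Icc_zero_update_zero c]
  rw [← sum_mul_eq_sub_sub_integral_mul _ ha hab hf_diff hf_int]
  exact sum_congr rfl fun k hk => by rw [Function.update_of_ne (by grind)]

end AbelSummation

theorem sum_Ioc_div_eq (a : ℕ → ℂ) {x y : ℝ} (hy : 0 < y) (hyx : y ≤ x) :
    ∑ n ∈ Ioc ⌊y⌋₊ ⌊x⌋₊, a n / n =
      (∑ n ∈ Icc 1 ⌊x⌋₊, a n) / x - (∑ n ∈ Icc 1 ⌊y⌋₊, a n) / y +
        ∫ t in y..x, (∑ n ∈ Icc 1 ⌊t⌋₊, a n) / (t : ℂ) ^ 2 := by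
  have hderiv : ∀ t ∈ Set.Icc y x,
      HasDerivAt (fun s : ℝ => (s : ℂ)⁻¹) (-((t : ℂ) ^ 2)⁻¹) t := fun t ht =>
    (hasDerivAt_inv (ofReal_ne_zero.2 (hy.trans_le ht.1).ne')).comp_ofReal
  have hcont : ContinuousOn (fun t : ℝ => -((t : ℂ) ^ 2)⁻¹) (Set.Icc y x) :=
    ContinuousOn.neg <| ContinuousOn.inv₀ (by fun_prop) fun t ht =>
      pow_ne_zero 2 (ofReal_ne_zero.2 (hy.trans_le ht.1).ne')
  have hderiv_int : IntegrableOn (deriv fun s : ℝ => (s : ℂ)⁻¹) (Set.Icc y x) :=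
    hcont.integrableOn_Icc.congr_fun (fun t ht => (hderiv t ht).deriv.symm) measurableSet_Icc
  have habel := sum_mul_eq_sub_sub_integral_mul_Icc_one a hy.le hyx
    (fun t ht => (hderiv t ht).differentiableAt) hderiv_int
  rw [← integral_of_le hyx] at habel
  rw [sum_congr rfl fun k _ => (by push_cast; ring : a k / k = ((k : ℝ) : ℂ)⁻¹ * a k),
    habel, integral_congr (g := fun t => -((∑ n ∈ Icc 1 ⌊t⌋₊, a n) / (t : ℂ) ^ 2))
      fun t ht => by simp only [(hderiv t (Set.uIcc_of_le hyx ▸ ht)).deriv]; ring,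
    intervalIntegral.integral_neg]
  ring

theorem intervalIntegrable_sum_Icc_div_sq (a : ℕ → ℂ) {x y : ℝ} (hy : 0 < y)
    (hyx : y ≤ x) :
    IntervalIntegrable (fun t : ℝ => (∑ n ∈ Icc 1 ⌊t⌋₊, a n) / (t : ℂ) ^ 2) volume y x := by
  have hcont : ContinuousOn (fun t : ℝ => ((t : ℂ) ^ 2)⁻¹) (Set.Icc y x) :=
    ContinuousOn.inv₀ (by fun_prop) fun t ht =>
      pow_ne_zero 2 (ofReal_ne_zero.2 (hy.trans_le ht.1).ne')
  rw [intervalIntegrable_iff_integrableOn_Icc_of_le hyx]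
  simpa only [div_eq_inv_mul] using
    integrableOn_mul_sum_Icc a hy.le hcont.integrableOn_Icc (m := 1)

section LogPowers

variable {s : Set ℝ} {x y : ℝ}

theorem continuousOn_ofReal_log_cpow (r : ℂ) (hs : ∀ t ∈ s, 1 < t) :
    ContinuousOn (fun t : ℝ => (Real.log t : ℂ) ^ r) s :=
  ContinuousOn.cpow_const (continuous_ofReal.comp_continuousOn <| continuousOn_log.mono
    fun t ht => by simp; linarith [hs t ht]) fun t ht => ofReal_mem_slitPlane.2 (log_pos (hs t ht))

theorem continuousOn_log_rpow_div (r : ℝ) (hs : ∀ t ∈ s, 1 < t) :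
    ContinuousOn (fun t : ℝ => Real.log t ^ r / t) s :=
  ((continuousOn_log.mono fun t ht => by simp; linarith [hs t ht]).rpow_const
    fun t ht => Or.inl (log_pos (hs t ht)).ne').div continuousOn_id fun t ht => by
      simp; linarith [hs t ht]

theorem integral_log_cpow_div {r : ℂ} (hr : r ≠ -1) (hy : 1 < y) (hx : 1 < x) :
    ∫ t in y..x, (Real.log t : ℂ) ^ r / t =
      ((Real.log x : ℂ) ^ (r + 1) - (Real.log y : ℂ) ^ (r + 1)) / (r + 1) := by
  have hone : ∀ t ∈ Set.uIcc y x, 1 < t := fun t ht => (lt_min hy hx).trans_le ht.1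
  rw [← integral_cpow (Or.inr ⟨hr, Set.notMem_uIcc_of_lt (log_pos hy) (log_pos hx)⟩),
    ← integral_deriv_smul_comp' (fun t ht => hasDerivAt_log (by linarith [hone t ht]))
      (continuousOn_inv₀.mono fun t ht => (by linarith [hone t ht] : t ≠ 0))]
  · exact integral_congr fun t _ => by simp [div_eq_inv_mul, Complex.real_smul]
  · rintro _ ⟨t, ht, rfl⟩
    exact (continuousAt_ofReal_cpow_const _ _
      (Or.inr (log_pos (hone t ht)).ne')).continuousWithinAt

theorem integral_log_rpow_div {r : ℝ} (hr : r ≠ -1) (hy : 1 < y) (hx : 1 < x) :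
    ∫ t in y..x, Real.log t ^ r / t =
      (Real.log x ^ (r + 1) - Real.log y ^ (r + 1)) / (r + 1) := by
  have hone : ∀ t ∈ Set.uIcc y x, 1 < t := fun t ht => (lt_min hy hx).trans_le ht.1
  rw [← integral_rpow (Or.inr ⟨hr, Set.notMem_uIcc_of_lt (log_pos hy) (log_pos hx)⟩),
    ← integral_deriv_smul_comp' (fun t ht => hasDerivAt_log (by linarith [hone t ht]))
      (continuousOn_inv₀.mono fun t ht => (by linarith [hone t ht] : t ≠ 0))]
  · exact integral_congr fun t _ => by simp [div_eq_inv_mul]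
  · rintro _ ⟨t, ht, rfl⟩
    exact (continuousAt_rpow_const _ _ (Or.inl (log_pos (hone t ht)).ne')).continuousWithinAt

end LogPowers

noncomputable def partialSumError (a : ℕ → ℂ) (c z : ℂ) (t : ℝ) : ℂ :=
  ∑ n ∈ Icc 1 ⌊t⌋₊, a n - c * t * (Real.log t : ℂ) ^ (z - 1)

theorem sum_div_sub_eq_partialSumError (a : ℕ → ℂ) {c z : ℂ} (hz : z ≠ 0) {x y : ℝ}
    (hy : 1 < y) (hyx : y ≤ x) :
    ∑ n ∈ Ioc ⌊y⌋₊ ⌊x⌋₊, a n / n -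
        c / z * ((Real.log x : ℂ) ^ z - (Real.log y : ℂ) ^ z) =
      (c * (Real.log x : ℂ) ^ (z - 1) + partialSumError a c z x / x) -
        (c * (Real.log y : ℂ) ^ (z - 1) + partialSumError a c z y / y) +
          ∫ t in y..x, partialSumError a c z t / (t : ℂ) ^ 2 := by
  have hone : ∀ t ∈ Set.uIcc y x, 1 < t := fun t ht =>
    (lt_min hy (hy.trans_le hyx)).trans_le ht.1
  have hmain_integrand : ∀ t ∈ Set.uIcc y x,
      c * t * (Real.log t : ℂ) ^ (z - 1) / (t : ℂ) ^ 2 =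
        c * ((Real.log t : ℂ) ^ (z - 1) / t) := fun t ht => by
    have : (t : ℂ) ≠ 0 := ofReal_ne_zero.2 (by linarith [hone t ht])
    field_simp
  have hmain : ∫ t in y..x, c * t * (Real.log t : ℂ) ^ (z - 1) / (t : ℂ) ^ 2 =
      c / z * ((Real.log x : ℂ) ^ z - (Real.log y : ℂ) ^ z) := by
    rw [integral_congr hmain_integrand, intervalIntegral.integral_const_mul,
      integral_log_cpow_div (by simpa using hz) hy (hy.trans_le hyx), sub_add_cancel]
    ring
  have hmain_int : IntervalIntegrable
      (fun t : ℝ => c * t * (Real.log t : ℂ) ^ (z - 1) / (t : ℂ) ^ 2) volume y x := by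
    refine ContinuousOn.intervalIntegrable (ContinuousOn.div ?_ (by fun_prop) fun t ht =>
      pow_ne_zero 2 (ofReal_ne_zero.2 (by linarith [hone t ht])))
    exact (by fun_prop : Continuous fun t : ℝ => c * t).continuousOn.mul
      (continuousOn_ofReal_log_cpow _ hone)
  simp only [partialSumError, sub_div]
  rw [integral_sub (intervalIntegrable_sum_Icc_div_sq a (by linarith) hyx) hmain_int, hmain,
    sum_Ioc_div_eq a (by linarith) hyx]
  have hx0 : (x : ℂ) ≠ 0 := ofReal_ne_zero.2 (by linarith)
  have hy0 : (y : ℂ) ≠ 0 := ofReal_ne_zero.2 (by linarith)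
  field_simp
  ring

theorem norm_mul_log_cpow_add_div_le {c z w : ℂ} {C t : ℝ} (ht : 2 ≤ t)
    (hw : ‖w‖ ≤ C * t * Real.log t ^ (z.re - 2)) :
    ‖c * (Real.log t : ℂ) ^ (z - 1) + w / t‖ ≤
      (‖c‖ + |C| / Real.log 2) * Real.log t ^ (z.re - 1) := by
  have hlog : 0 < Real.log t := Real.log_pos (by linarith)
  have hlog2 : Real.log 2 ≤ Real.log t := Real.log_le_log two_pos ht
  have hw' : ‖w / t‖ ≤ |C| / Real.log 2 * Real.log t ^ (z.re - 1) := calc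
    ‖w / t‖ ≤ C * Real.log t ^ (z.re - 2) := by
      rw [norm_div, norm_real, Real.norm_of_nonneg (by linarith), div_le_iff₀ (by linarith)]
      linarith
    _ ≤ |C| * (Real.log t ^ (z.re - 1) / Real.log t) := by
      rw [← Real.rpow_sub_one hlog.ne', sub_sub, one_add_one_eq_two]
      gcongr
      exact le_abs_self C
    _ ≤ |C| / Real.log 2 * Real.log t ^ (z.re - 1) := by
      rw [mul_div, div_mul_eq_mul_div, mul_comm]
      gcongr
  calc ‖c * (Real.log t : ℂ) ^ (z - 1) + w / t‖
      ≤ ‖c‖ * Real.log t ^ (z.re - 1) + |C| / Real.log 2 * Real.log t ^ (z.re - 1) := by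
        refine (norm_add_le _ _).trans (add_le_add (le_of_eq ?_) hw')
        rw [norm_mul, norm_cpow_eq_rpow_re_of_pos hlog, sub_re, one_re]
    _ = (‖c‖ + |C| / Real.log 2) * Real.log t ^ (z.re - 1) := by ring

theorem norm_integral_div_sq_le {E : ℝ → ℂ} {C s x y : ℝ} (hs : s ≠ 1) (hy : 1 < y)
    (hyx : y ≤ x) (hE : ∀ t ∈ Set.Ioc y x, ‖E t‖ ≤ C * t * Real.log t ^ (s - 2)) :
    ‖∫ t in y..x, E t / (t : ℂ) ^ 2‖ ≤
      |C| / |s - 1| * (Real.log x ^ (s - 1) + Real.log y ^ (s - 1)) := by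
  have hone : ∀ t ∈ Set.uIcc y x, 1 < t := fun t ht =>
    (lt_min hy (hy.trans_le hyx)).trans_le ht.1
  calc ‖∫ t in y..x, E t / (t : ℂ) ^ 2‖
      ≤ ∫ t in y..x, C * (Real.log t ^ (s - 2) / t) := by
        refine intervalIntegral.norm_integral_le_of_norm_le hyx (ae_of_all _ fun t ht => ?_)
          (((continuousOn_log_rpow_div _ hone).intervalIntegrable).const_mul C)
        have ht0 : 0 < t := by linarith [ht.1]
        rw [norm_div, norm_pow, norm_real, Real.norm_of_nonneg ht0.le,
          div_le_iff₀ (by positivity)]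
        calc ‖E t‖ ≤ C * t * Real.log t ^ (s - 2) := hE t ht
          _ = C * (Real.log t ^ (s - 2) / t) * t ^ 2 := by field_simp
    _ = C * ((Real.log x ^ (s - 1) - Real.log y ^ (s - 1)) / (s - 1)) := by
        rw [intervalIntegral.integral_const_mul,
          integral_log_rpow_div (by contrapose! hs; linarith) hy (hy.trans_le hyx)]
        ring_nf
    _ ≤ |C| / |s - 1| * (Real.log x ^ (s - 1) + Real.log y ^ (s - 1)) := by
        have hx' := Real.rpow_nonneg (Real.log_nonneg (hy.trans_le hyx).le) (s - 1)
        have hy' := Real.rpow_nonneg (Real.log_nonneg hy.le) (s - 1)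
        calc _ ≤ |C * ((Real.log x ^ (s - 1) - Real.log y ^ (s - 1)) / (s - 1))| :=
              le_abs_self _
          _ = |C| / |s - 1| * |Real.log x ^ (s - 1) - Real.log y ^ (s - 1)| := by
            rw [abs_mul, abs_div]; ring
          _ ≤ _ := by gcongr; exact abs_sub_le_iff.2 ⟨by linarith, by linarith⟩

theorem abel_summation_remainder (a : ℕ → ℂ) (c z : ℂ) (hz : z ≠ 0) (hz1 : z.re ≠ 1)
    (hA : ∃ C : ℝ, ∀ x : ℝ, 2 ≤ x →
      ‖(∑ n ∈ Finset.Icc 1 ⌊x⌋₊, a n) -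
          c * x * (Real.log x : ℂ) ^ (z - 1)‖
        ≤ C * x * Real.log x ^ (z.re - 2)) :
    ∃ C : ℝ, ∀ x y : ℝ, 2 ≤ y → y ≤ x →
      ‖(∑ n ∈ Finset.Ioc ⌊y⌋₊ ⌊x⌋₊, a n / n) -
          (c / z) * ((Real.log x : ℂ) ^ z - (Real.log y : ℂ) ^ z)‖
        ≤ C * (Real.log x ^ (z.re - 1) + Real.log y ^ (z.re - 1)) := by
  obtain ⟨C, hC⟩ := hA
  refine ⟨‖c‖ + |C| / Real.log 2 + |C| / |z.re - 1|, fun x y hy hyx => ?_⟩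
  have hx : 2 ≤ x := hy.trans hyx
  have hEx := norm_mul_log_cpow_add_div_le (c := c) (w := partialSumError a c z x) hx (hC x hx)
  have hEy := norm_mul_log_cpow_add_div_le (c := c) (w := partialSumError a c z y) hy (hC y hy)
  have hI := norm_integral_div_sq_le (E := partialSumError a c z) hz1 (by linarith) hyx
    fun t ht => hC t (by linarith [ht.1])
  rw [sum_div_sub_eq_partialSumError a hz (by linarith) hyx]
  calc _ ≤ ‖c * (Real.log x : ℂ) ^ (z - 1) + partialSumError a c z x / x‖ +
          ‖c * (Real.log y : ℂ) ^ (z - 1) + partialSumError a c z y / y‖ +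
          ‖∫ t in y..x, partialSumError a c z t / (t : ℂ) ^ 2‖ :=
        (norm_add_le _ _).trans (by gcongr; exact norm_sub_le _ _)
    _ ≤ _ := add_le_add (add_le_add hEx hEy) hI
    _ = _ := by ring
end
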